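/- Forward activation norm bound. Consider the ResNet with input ‖x‖₂ ≤ B, activation satisfying |φ(z)| ≤ C_φ|z| for all z, and parameters satisfying ‖U‖ ≤ 3√n and ‖W^{(ℓ)}‖ ≤ 3√n, ‖V^{(ℓ)}‖ ≤ 3√n for all ℓ = 1,…,L. Then for every ℓ ∈ {0,1,…,L}: (1/√n)·‖x^{(ℓ)}‖₂ ≤ (1 + 9α·C_φ·σ_v·σ_w)^ℓ · (3B/√d). In particular (1/√n)·‖x^{(ℓ)}‖₂ ≤ K₁ := (1 + 9α·C_φ·σ_v·σ_w)^L · (3B/√d) for all ℓ. -/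

import Mathlib

open MeasureTheory ProbabilityTheory Filter

noncomputable section

/-- Index type for all ResNet parameters: w^{(L+1)}, {W^{(ℓ)}}, {V^{(ℓ)}}, U. -/
abbrev ParamIdx (n L d : ℕ) : Type :=
  (Fin n) ⊕ (Fin L × Fin n × Fin n) ⊕ (Fin L × Fin n × Fin n) ⊕ (Fin n × Fin d)

/-- The full (vectorized) parameter vector. -/
abbrev Params (n L d : ℕ) : Type := ParamIdx n L d → ℝ

/-- Last-layer weight vector w^{(L+1)}. -/
def wOut {n L d : ℕ} (θ : Params n L d) : Fin n → ℝ := fun i => θ (Sum.inl i)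

/-- W^{(ℓ)} for ℓ = 1,…,L (zero outside this range). -/
def Wmat {n L d : ℕ} (θ : Params n L d) (ℓ : ℕ) : Matrix (Fin n) (Fin n) ℝ :=
  if h : 1 ≤ ℓ ∧ ℓ ≤ L then
    Matrix.of fun i j => θ (Sum.inr (Sum.inl (⟨ℓ - 1, by omega⟩, i, j)))
  else 0

/-- V^{(ℓ)} for ℓ = 1,…,L (zero outside this range). -/
def Vmat {n L d : ℕ} (θ : Params n L d) (ℓ : ℕ) : Matrix (Fin n) (Fin n) ℝ :=
  if h : 1 ≤ ℓ ∧ ℓ ≤ L then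
    Matrix.of fun i j => θ (Sum.inr (Sum.inr (Sum.inl (⟨ℓ - 1, by omega⟩, i, j))))
  else 0

/-- Input lifting matrix U. -/
def Umat {n L d : ℕ} (θ : Params n L d) : Matrix (Fin n) (Fin d) ℝ :=
  Matrix.of fun i j => θ (Sum.inr (Sum.inr (Sum.inr (i, j))))

/-- Euclidean (ℓ²) norm of a finite vector. -/
def l2norm {k : ℕ} (v : Fin k → ℝ) : ℝ := Real.sqrt (∑ i, (v i) ^ 2)

/-- Euclidean norm of a full parameter vector. -/
def paramNorm {n L d : ℕ} (θ : Params n L d) : ℝ := Real.sqrt (∑ i, (θ i) ^ 2)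

/-- Spectral (operator) norm of a matrix. -/
def specNorm {m k : ℕ} (A : Matrix (Fin m) (Fin k) ℝ) : ℝ :=
  sSup ((fun v => l2norm (A.mulVec v)) '' {v | l2norm v ≤ 1})

/-- Smallest singular value of a matrix. -/
def singMin {m k : ℕ} (A : Matrix (Fin m) (Fin k) ℝ) : ℝ :=
  sInf ((fun v => l2norm (A.mulVec v)) '' {v | l2norm v = 1})

/-- Frobenius norm of a matrix. -/
def frobNorm {m k : ℕ} (A : Matrix (Fin m) (Fin k) ℝ) : ℝ :=
  Real.sqrt (∑ i, ∑ j, (A i j) ^ 2)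

/-- Layer activations x^{(ℓ)} of the ResNet. -/
def xvec {n L d : ℕ} (φ : ℝ → ℝ) (α σv σw : ℝ) (θ : Params n L d) (x : Fin d → ℝ) :
    ℕ → Fin n → ℝ
  | 0 => (Real.sqrt d)⁻¹ • (Umat θ).mulVec x
  | ℓ + 1 =>
      xvec φ α σv σw θ x ℓ +
        (α * σv / Real.sqrt n) • (Vmat θ (ℓ + 1)).mulVec
          (fun i => φ ((σw / Real.sqrt n) *
              (Wmat θ (ℓ + 1)).mulVec (xvec φ α σv σw θ x ℓ) i))

/-- Pre-activations g^{(ℓ)} of the ResNet (meaningful for ℓ = 1,…,L). -/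
def gvec {n L d : ℕ} (φ : ℝ → ℝ) (α σv σw : ℝ) (θ : Params n L d) (x : Fin d → ℝ)
    (ℓ : ℕ) : Fin n → ℝ :=
  (σw / Real.sqrt n) • (Wmat θ ℓ).mulVec (xvec φ α σv σw θ x (ℓ - 1))

/-- The ResNet output f(x;θ). -/
def fnet {n L d : ℕ} (φ : ℝ → ℝ) (α σv σw : ℝ) (θ : Params n L d) (x : Fin d → ℝ) : ℝ :=
  (σw / Real.sqrt n) * ∑ i, wOut θ i * xvec φ α σv σw θ x L i

/-- The i.i.d. standard Gaussian initialization measure on the parameters. -/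
def initMeasure (n L d : ℕ) : Measure (Params n L d) :=
  Measure.pi fun _ => gaussianReal 0 1

/-- Standard Gaussian on ℝ². -/
def stdGauss2 : Measure (ℝ × ℝ) := (gaussianReal 0 1).prod (gaussianReal 0 1)

/-- The centered bivariate Gaussian N(0,Σ) for Σ = [[K11,K12],[K12,K22]] positive
semidefinite, realized via the Cholesky factorization. -/
def biGauss (K11 K12 K22 : ℝ) : Measure (ℝ × ℝ) :=
  stdGauss2.map (fun z => (Real.sqrt K11 * z.1,
    (K12 / Real.sqrt K11) * z.1 + Real.sqrt (K22 - K12 ^ 2 / K11) * z.2))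

/-- T(Σ) = E_{(u,v)∼N(0,Σ)}[φ(u)φ(v)]. -/
def TT (φ : ℝ → ℝ) (K11 K12 K22 : ℝ) : ℝ :=
  ∫ uv, φ uv.1 * φ uv.2 ∂(biGauss K11 K12 K22)

/-- Ṫ(Σ) = E_{(u,v)∼N(0,Σ)}[φ'(u)φ'(v)]. -/
def TTdot (φ : ℝ → ℝ) (K11 K12 K22 : ℝ) : ℝ :=
  ∫ uv, deriv φ uv.1 * deriv φ uv.2 ∂(biGauss K11 K12 K22)

/-- The limiting GP kernels: `Kker … ℓ x y` is K^{(ℓ+1)}(x,y); in particular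
`Kker … 0 x y = K^{(1)}(x,y) = (σ_w²/d)·xᵀy` and `Kker … L x y = K^{(L+1)}(x,y)`. -/
def Kker (φ : ℝ → ℝ) (α σv σw : ℝ) {d : ℕ} : ℕ → (Fin d → ℝ) → (Fin d → ℝ) → ℝ
  | 0 => fun x y => σw ^ 2 / d * ∑ i, x i * y i
  | ℓ + 1 => fun x y =>
      Kker φ α σv σw ℓ x y + α ^ 2 * σv ^ 2 * σw ^ 2 *
        TT φ (Kker φ α σv σw ℓ x x) (Kker φ α σv σw ℓ x y) (Kker φ α σv σw ℓ y y)

/-! Each residual block adds to `x^{(ℓ)}` a branch of norm at most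
`(α σ_v/√n)·‖V‖·C_φ·(σ_w/√n)·‖W‖·‖x^{(ℓ)}‖ ≤ 9 α C_φ σ_v σ_w ‖x^{(ℓ)}‖`, the `√n` normalisations
cancelling against `‖W‖, ‖V‖ ≤ 3√n`. Hence the norm grows at most geometrically with ratio
`1 + 9 α C_φ σ_v σ_w`, starting from `‖x^{(0)}‖ ≤ ‖U‖ B/√d ≤ 3√n B/√d`. -/

open scoped Matrix.Norms.L2Operator

section L2

variable {k : ℕ}

lemma l2norm_eq_norm_toLp (v : Fin k → ℝ) :
    l2norm v = ‖(WithLp.toLp 2 v : EuclideanSpace ℝ (Fin k))‖ := by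
  simp [l2norm, EuclideanSpace.norm_eq]

lemma l2norm_nonneg (v : Fin k → ℝ) : 0 ≤ l2norm v := Real.sqrt_nonneg _

lemma l2norm_add_le (v w : Fin k → ℝ) : l2norm (v + w) ≤ l2norm v + l2norm w := by
  simpa only [l2norm_eq_norm_toLp, WithLp.toLp_add] using norm_add_le _ _

lemma l2norm_smul (a : ℝ) (v : Fin k → ℝ) : l2norm (a • v) = |a| * l2norm v := by
  simp only [l2norm_eq_norm_toLp, WithLp.toLp_smul, norm_smul, Real.norm_eq_abs]

lemma nonneg_of_abs_le_mul_abs {φ : ℝ → ℝ} {C : ℝ} (hφ : ∀ z, |φ z| ≤ C * |z|) : 0 ≤ C := by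
  simpa using (abs_nonneg (φ 1)).trans (hφ 1)

lemma l2norm_comp_le {φ : ℝ → ℝ} {C : ℝ} (hφ : ∀ z, |φ z| ≤ C * |z|) (v : Fin k → ℝ) :
    l2norm (φ ∘ v) ≤ C * l2norm v := by
  have hC := nonneg_of_abs_le_mul_abs hφ
  rw [l2norm, l2norm, ← Real.sqrt_sq hC, ← Real.sqrt_mul (sq_nonneg C), Finset.mul_sum]
  gcongr with i
  calc φ (v i) ^ 2 = |φ (v i)| ^ 2 := (sq_abs _).symm
    _ ≤ (C * |v i|) ^ 2 := by gcongr; exact hφ _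
    _ = C ^ 2 * v i ^ 2 := by rw [mul_pow, sq_abs]

end L2

section SpecNorm

variable {m k : ℕ}

lemma specNorm_eq_l2_opNorm (A : Matrix (Fin m) (Fin k) ℝ) : specNorm A = ‖A‖ := by
  rw [Matrix.l2_opNorm_def, ← ContinuousLinearMap.sSup_unitClosedBall_eq_norm, specNorm]
  congr 1
  ext r
  constructor
  · rintro ⟨v, hv, rfl⟩
    exact ⟨WithLp.toLp 2 v, by simpa [l2norm_eq_norm_toLp] using hv,
      by simp [l2norm_eq_norm_toLp]⟩
  · rintro ⟨v, hv, rfl⟩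
    exact ⟨WithLp.ofLp v, by simpa [l2norm_eq_norm_toLp] using hv,
      by simp [l2norm_eq_norm_toLp, Matrix.toLpLin_apply]⟩

lemma l2norm_mulVec_le (A : Matrix (Fin m) (Fin k) ℝ) (v : Fin k → ℝ) :
    l2norm (A.mulVec v) ≤ specNorm A * l2norm v := by
  rw [specNorm_eq_l2_opNorm, l2norm_eq_norm_toLp, l2norm_eq_norm_toLp]
  exact A.l2_opNorm_mulVec (WithLp.toLp 2 v)

lemma l2norm_mulVec_le_of_le {A : Matrix (Fin m) (Fin k) ℝ} {v : Fin k → ℝ} {a b : ℝ}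
    (hA : specNorm A ≤ a) (hv : l2norm v ≤ b) : l2norm (A.mulVec v) ≤ a * b :=
  (l2norm_mulVec_le A v).trans <| mul_le_mul hA hv (l2norm_nonneg v)
    ((specNorm_eq_l2_opNorm A ▸ norm_nonneg A).trans hA)

end SpecNorm

section ResNet

variable {n L d : ℕ} {φ : ℝ → ℝ} {α σv σw Cφ B c : ℝ} {θ : Params n L d} {x : Fin d → ℝ}

lemma inv_sqrt_mul_l2norm_xvec_zero_le (hn : 1 ≤ n)
    (hU : specNorm (Umat θ) ≤ c * Real.sqrt n) (hx : l2norm x ≤ B) :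
    (Real.sqrt n)⁻¹ * l2norm (xvec φ α σv σw θ x 0) ≤ c * B / Real.sqrt d := by
  have hsn : Real.sqrt n ≠ 0 := (Real.sqrt_pos.mpr (by exact_mod_cast hn)).ne'
  have hUx := l2norm_mulVec_le_of_le hU hx
  rw [xvec, l2norm_smul, abs_of_nonneg (by positivity)]
  calc (Real.sqrt n)⁻¹ * ((Real.sqrt d)⁻¹ * l2norm ((Umat θ).mulVec x))
      ≤ (Real.sqrt n)⁻¹ * ((Real.sqrt d)⁻¹ * (c * Real.sqrt n * B)) := by gcongr
    _ = c * B / Real.sqrt d := by field_simp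

lemma l2norm_xvec_succ_le (hn : 1 ≤ n) (hα : 0 ≤ α) (hσv : 0 ≤ σv) (hσw : 0 ≤ σw)
    (hφ : ∀ z, |φ z| ≤ Cφ * |z|) (ℓ : ℕ)
    (hW : specNorm (Wmat θ (ℓ + 1)) ≤ c * Real.sqrt n)
    (hV : specNorm (Vmat θ (ℓ + 1)) ≤ c * Real.sqrt n) :
    l2norm (xvec φ α σv σw θ x (ℓ + 1)) ≤
      (1 + c ^ 2 * α * Cφ * σv * σw) * l2norm (xvec φ α σv σw θ x ℓ) := by
  have hsn : Real.sqrt n ≠ 0 := (Real.sqrt_pos.mpr (by exact_mod_cast hn)).ne'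
  have hCφ := nonneg_of_abs_le_mul_abs hφ
  set a := l2norm (xvec φ α σv σw θ x ℓ)
  have hWx := l2norm_mulVec_le_of_le hW le_rfl (v := xvec φ α σv σw θ x ℓ)
  have hact : l2norm (φ ∘ ((σw / Real.sqrt n) • (Wmat θ (ℓ + 1)).mulVec (xvec φ α σv σw θ x ℓ)))
      ≤ Cφ * (σw / Real.sqrt n * (c * Real.sqrt n * a)) := by
    refine (l2norm_comp_le hφ _).trans ?_
    rw [l2norm_smul, abs_of_nonneg (by positivity)]
    gcongr
  have hbranch := l2norm_mulVec_le_of_le hV hact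
  calc l2norm (xvec φ α σv σw θ x (ℓ + 1))
      ≤ a + α * σv / Real.sqrt n *
          (c * Real.sqrt n * (Cφ * (σw / Real.sqrt n * (c * Real.sqrt n * a)))) := by
        refine (l2norm_add_le _ _).trans ?_
        rw [l2norm_smul, abs_of_nonneg (by positivity)]
        gcongr
        exact hbranch
    _ = (1 + c ^ 2 * α * Cφ * σv * σw) * a := by field_simp

end ResNet

theorem forward_activation_norm_bound_general
    (n L d : ℕ) (hn : 1 ≤ n)
    (α σv σw Cφ : ℝ) (hα : 0 < α) (hσv : 0 < σv) (hσw : 0 < σw)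
    (φ : ℝ → ℝ) (hφ : ∀ z : ℝ, |φ z| ≤ Cφ * |z|)
    (B : ℝ) (x : Fin d → ℝ) (hx : l2norm x ≤ B)
    (θ : Params n L d)
    (hU : specNorm (Umat θ) ≤ 3 * Real.sqrt n)
    (hWV : ∀ ℓ : ℕ, 1 ≤ ℓ → ℓ ≤ L →
      specNorm (Wmat θ ℓ) ≤ 3 * Real.sqrt n ∧ specNorm (Vmat θ ℓ) ≤ 3 * Real.sqrt n) :
    (∀ ℓ : ℕ, ℓ ≤ L →
      (Real.sqrt n)⁻¹ * l2norm (xvec φ α σv σw θ x ℓ) ≤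
        (1 + 9 * α * Cφ * σv * σw) ^ ℓ * (3 * B / Real.sqrt d)) ∧
    (∀ ℓ : ℕ, ℓ ≤ L →
      (Real.sqrt n)⁻¹ * l2norm (xvec φ α σv σw θ x ℓ) ≤
        (1 + 9 * α * Cφ * σv * σw) ^ L * (3 * B / Real.sqrt d)) := by
  set r := 1 + 9 * α * Cφ * σv * σw
  have hr : 1 ≤ r := by
    have := nonneg_of_abs_le_mul_abs hφ
    simp only [r, le_add_iff_nonneg_right]
    positivity
  have hbound : 0 ≤ 3 * B / Real.sqrt d :=
    div_nonneg (by linarith [l2norm_nonneg x]) (Real.sqrt_nonneg _)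
  have step : ∀ k < L, l2norm (xvec φ α σv σw θ x (k + 1)) ≤ r * l2norm (xvec φ α σv σw θ x k) :=
    fun k hk ↦ by
      obtain ⟨hW, hV⟩ := hWV (k + 1) (by omega) (by omega)
      simpa only [r, show (3 : ℝ) ^ 2 = 9 by norm_num] using
        l2norm_xvec_succ_le hn hα.le hσv.le hσw.le hφ k hW hV
  have growth : ∀ ℓ ≤ L,
      (Real.sqrt n)⁻¹ * l2norm (xvec φ α σv σw θ x ℓ) ≤ r ^ ℓ * (3 * B / Real.sqrt d) := by
    intro ℓ hℓ
    have hgeom := le_geom (u := fun k ↦ l2norm (xvec φ α σv σw θ x k)) (by linarith) ℓ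
      fun k hk ↦ step k (by omega)
    calc (Real.sqrt n)⁻¹ * l2norm (xvec φ α σv σw θ x ℓ)
        ≤ r ^ ℓ * ((Real.sqrt n)⁻¹ * l2norm (xvec φ α σv σw θ x 0)) := by
          rw [mul_left_comm]; exact mul_le_mul_of_nonneg_left hgeom (by positivity)
      _ ≤ r ^ ℓ * (3 * B / Real.sqrt d) := by
          gcongr; exact inv_sqrt_mul_l2norm_xvec_zero_le hn hU hx
  exact ⟨growth, fun ℓ hℓ ↦
    (growth ℓ hℓ).trans (mul_le_mul_of_nonneg_right (pow_le_pow_right₀ hr hℓ) hbound)⟩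

/-- **Forward activation norm bound.** If ‖x‖₂ ≤ B, |φ(z)| ≤ C_φ|z|, ‖U‖ ≤ 3√n and
‖W^{(ℓ)}‖, ‖V^{(ℓ)}‖ ≤ 3√n for all ℓ, then for every ℓ ∈ {0,…,L}:
(1/√n)‖x^{(ℓ)}‖₂ ≤ (1 + 9αC_φσ_vσ_w)^ℓ·(3B/√d); in particular it is ≤ K₁ for all ℓ. -/
theorem forward_activation_norm_bound
    (n L d : ℕ) (hn : 1 ≤ n) (hL : 1 ≤ L) (hd : 1 ≤ d)
    (α σv σw Cφ : ℝ) (hα : 0 < α) (hσv : 0 < σv) (hσw : 0 < σw) (hCφ : 0 < Cφ)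
    (φ : ℝ → ℝ) (hφ : ∀ z : ℝ, |φ z| ≤ Cφ * |z|)
    (B : ℝ) (x : Fin d → ℝ) (hx : l2norm x ≤ B)
    (θ : Params n L d)
    (hU : specNorm (Umat θ) ≤ 3 * Real.sqrt n)
    (hWV : ∀ ℓ : ℕ, 1 ≤ ℓ → ℓ ≤ L →
      specNorm (Wmat θ ℓ) ≤ 3 * Real.sqrt n ∧ specNorm (Vmat θ ℓ) ≤ 3 * Real.sqrt n) :
    (∀ ℓ : ℕ, ℓ ≤ L →
      (Real.sqrt n)⁻¹ * l2norm (xvec φ α σv σw θ x ℓ) ≤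
        (1 + 9 * α * Cφ * σv * σw) ^ ℓ * (3 * B / Real.sqrt d)) ∧
    (∀ ℓ : ℕ, ℓ ≤ L →
      (Real.sqrt n)⁻¹ * l2norm (xvec φ α σv σw θ x ℓ) ≤
        (1 + 9 * α * Cφ * σv * σw) ^ L * (3 * B / Real.sqrt d)) :=
  forward_activation_norm_bound_general n L d hn α σv σw Cφ hα hσv hσw φ hφ B x hx θ hU hWV

end
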